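/- arXiv:2502.01950 — 3 statements merged into one kernel-verified Lean document; each statement's English description precedes it below -/
import Mathlib

section
/- Let H be a maximal subgroup of a finite group G, θ an irreducible character of H, and χ an irreducible constituent of the induced character θ^G. Then cod(χ) ≥ cod(θ). -/
open CategoryTheory

/-- The kernel of (the character of) a finite-dimensional complex representation. -/
noncomputable def charKer {G : Type} [Group G] (V : FDRep ℂ G) : Subgroup G :=
  MonoidHom.ker (Representation.asGroupHom V.ρ)

/-- The codegree of a character: `|G : ker χ| / χ(1)`. -/
noncomputable def codeg {G : Type} [Group G] (V : FDRep ℂ G) : ℕ :=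
  (charKer V).index / Module.finrank ℂ V

/-- The set of codegrees of irreducible characters of `G`. -/
def codSet (G : Type) [Group G] : Set ℕ :=
  {n | ∃ V : FDRep ℂ G, Simple V ∧ codeg V = n}

/-- Inner product of class functions on a finite group. -/
noncomputable def innerChar (G : Type) [Group G] (f g : G → ℂ) : ℂ :=
  (∑ᶠ x : G, f x * starRingEnd ℂ (g x)) / Nat.card G

open scoped Classical in
/-- The induced character `θ^G` of a character `θ` of a subgroup `H ≤ G`. -/
noncomputable def indChar {G : Type} [Group G] (H : Subgroup G) (θ : FDRep ℂ ↥H) : G → ℂ :=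
  fun g => (∑ᶠ x : G, if h : x * g * x⁻¹ ∈ H then θ.character ⟨x * g * x⁻¹, h⟩ else 0) /
    Nat.card ↥H

/-
Frobenius reciprocity turns `⟨θ^G, χ⟩ ≠ 0` into a nonzero `H`-map `θ → χ|_H`, injective since `θ`
is irreducible; hence `H ∩ ker χ ≤ ker θ`. If `ker χ ≤ H`, this gives
`|G : ker χ| ≥ |G : H| |H : ker θ|`, while the `G`-translates of the image of `θ` span `χ`, so
`χ(1) ≤ |G : H| θ(1)`; dividing gives the inequality. Otherwise maximality of `H` gives
`H ker χ = G`, so `χ|_H` is irreducible and the map is an isomorphism: `ker θ = H ∩ ker χ`,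
`θ(1) = χ(1)` and `|H : H ∩ ker χ| = |G : ker χ|`, so the codegrees are equal.

Comparing the inner product of characters with a dimension of intertwiners needs
`χ(g⁻¹) = conj χ(g)`, which holds because `χ.ρ g` is diagonalizable with roots of unity as
eigenvalues.
-/

open Module

namespace Module.End

variable {K V : Type*} [Field K] [AddCommGroup V] [Module K V]

theorem pow_apply_of_mem_eigenspace {f : End K V} {μ : K} {x : V} (hx : x ∈ f.eigenspace μ)
    (k : ℕ) : (f ^ k) x = μ ^ k • x := by
  induction k <;> simp [*, pow_succ', mem_eigenspace_iff.mp hx, smul_smul, pow_succ μ]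

theorem mapsTo_eigenspace_pow (f : End K V) (μ : K) (k : ℕ) :
    Set.MapsTo (f ^ k) (f.eigenspace μ) (f.eigenspace μ) := fun x hx => by
  rw [SetLike.mem_coe, pow_apply_of_mem_eigenspace hx]
  exact Submodule.smul_mem _ _ hx

theorem trace_pow_eq_sum_eigenvalues [FiniteDimensional K V] {f : End K V}
    (hf : ⨆ μ, f.eigenspace μ = ⊤) (k : ℕ) :
    LinearMap.trace K V (f ^ k) =
      ∑ μ ∈ f.finite_hasEigenvalue.toFinset, μ ^ k * finrank K (f.eigenspace μ) := by
  classical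
  have hint :=
    DirectSum.isInternal_submodule_of_iSupIndep_of_iSup_eq_top f.eigenspaces_iSupIndep hf
  rw [LinearMap.trace_eq_sum_trace_restrict' hint f.finite_hasEigenvalue
    (f.mapsTo_eigenspace_pow · k)]
  refine Finset.sum_congr rfl fun μ _ => ?_
  have hscalar : (f ^ k).restrict (f.mapsTo_eigenspace_pow μ k) = μ ^ k • LinearMap.id := by
    ext ⟨x, hx⟩
    exact pow_apply_of_mem_eigenspace hx k
  rw [hscalar, map_smul, LinearMap.trace_id, smul_eq_mul]

theorem HasEigenvalue.pow_eq_one {f : End K V} {μ : K} (hμ : f.HasEigenvalue μ) {n : ℕ}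
    (hf : f ^ n = 1) : μ ^ n = 1 := by
  obtain ⟨v, hv⟩ := hμ.exists_hasEigenvector
  have h : (μ ^ n - 1) • v = 0 := by
    rw [sub_smul, one_smul, ← hv.pow_apply, hf, one_apply, sub_self]
  exact sub_eq_zero.mp ((smul_eq_zero.mp h).resolve_right hv.2)

theorem isSemisimple_of_pow_eq_one {f : End K V} {n : ℕ} (hn : (n : K) ≠ 0) (hf : f ^ n = 1) :
    f.IsSemisimple :=
  isSemisimple_of_squarefree_aeval_eq_zero
    (Polynomial.X_pow_sub_one_separable_iff.mpr hn).squarefree (by simp [hf])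

end Module.End

theorem Complex.pow_pred_eq_conj_of_pow_eq_one {μ : ℂ} {n : ℕ} (hn : n ≠ 0) (h : μ ^ n = 1) :
    μ ^ (n - 1) = starRingEnd ℂ μ := by
  rw [← Complex.inv_eq_conj (Complex.norm_eq_one_of_pow_eq_one h hn)]
  exact eq_inv_of_mul_eq_one_left (by rw [pow_sub_one_mul hn, h])

theorem Module.End.trace_pow_pred_eq_conj_trace {V : Type*} [AddCommGroup V] [Module ℂ V]
    [FiniteDimensional ℂ V] {f : End ℂ V} {n : ℕ} (hn : n ≠ 0) (hf : f ^ n = 1) :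
    LinearMap.trace ℂ V (f ^ (n - 1)) = starRingEnd ℂ (LinearMap.trace ℂ V f) := by
  have htop := (isSemisimple_of_pow_eq_one (Nat.cast_ne_zero.mpr hn) hf).iSup_eigenspace_eq_top
  conv_rhs => rw [← pow_one f]
  rw [trace_pow_eq_sum_eigenvalues htop, trace_pow_eq_sum_eigenvalues htop, map_sum]
  refine Finset.sum_congr rfl fun μ hμ => ?_
  rw [Set.Finite.mem_toFinset] at hμ
  rw [map_mul, pow_one, Complex.conj_natCast,
    Complex.pow_pred_eq_conj_of_pow_eq_one hn (hμ.pow_eq_one hf)]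

theorem Representation.char_inv {G V : Type*} [Group G] [Finite G] [AddCommGroup V]
    [Module ℂ V] [FiniteDimensional ℂ V] (ρ : Representation ℂ G V) (g : G) :
    ρ.character g⁻¹ = starRingEnd ℂ (ρ.character g) := by
  have hn := (orderOf_pos g).ne'
  have hinv : g⁻¹ = g ^ (orderOf g - 1) :=
    inv_eq_of_mul_eq_one_left (by rw [pow_sub_one_mul hn, pow_orderOf_eq_one])
  rw [Representation.character, hinv, map_pow]
  exact Module.End.trace_pow_pred_eq_conj_trace hn
    (by rw [← map_pow, pow_orderOf_eq_one, map_one])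

namespace FDRep

variable {k G : Type*} [Field k] [Group G]

def subrepresentationι {V : FDRep k G} (p : Subrepresentation V.ρ) :
    FDRep.of p.toRepresentation ⟶ V where
  hom := FGModuleCat.ofHom p.toSubmodule.subtype
  comm _ := rfl

theorem nontrivial_of_simple (V : FDRep k G) [Simple V] : Nontrivial V := by
  by_contra h
  rw [not_nontrivial_iff_subsingleton] at h
  exact id_nonzero V (by ext v; exact Subsingleton.elim _ _)

instance isIrreducible_of_simple (V : FDRep k G) [Simple V] :
    Representation.IsIrreducible V.ρ := by
  have := nontrivial_of_simple V
  refine { exists_pair_ne := ⟨⊥, ⊤, fun h => ?_⟩, eq_bot_or_eq_top := fun p => ?_ }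
  · obtain ⟨v, hv⟩ := exists_ne (0 : V)
    exact hv (show v ∈ (⊥ : Subrepresentation V.ρ) from h ▸ trivial)
  have : Mono (subrepresentationι p) :=
    ConcreteCategory.mono_of_injective _ Subtype.val_injective
  by_cases hι : subrepresentationι p = 0
  · left
    ext v
    refine ⟨fun hv => ?_, fun hv => (show v = 0 from hv) ▸ zero_mem p.toSubmodule⟩
    exact congr(($hι).hom ⟨v, hv⟩)
  · right
    have := (Simple.mono_isIso_iff_nonzero _).mpr hι
    ext v
    refine ⟨fun _ => trivial, fun _ => ?_⟩
    obtain ⟨w, rfl⟩ := (isoToLinearEquiv (asIso (subrepresentationι p))).surjective v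
    exact w.2

end FDRep

theorem Submodule.finrank_iSup_le_sum {K V ι : Type*} [DivisionRing K] [AddCommGroup V]
    [Module K V] [FiniteDimensional K V] [Fintype ι] (p : ι → Submodule K V) :
    finrank K ↥(⨆ i, p i) ≤ ∑ i, finrank K (p i) := by
  classical
  rw [← Finset.sup_univ_eq_iSup]
  induction (Finset.univ : Finset ι) using Finset.induction with
  | empty => simp
  | insert a s ha ih =>
    rw [Finset.sup_insert, Finset.sum_insert ha]
    exact (Submodule.finrank_add_le_finrank_add_finrank _ _).trans (Nat.add_le_add_left ih _)

namespace Representation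

variable {k G V W : Type*} [Field k] [Group G] [AddCommGroup V] [Module k V]
  [AddCommGroup W] [Module k W] {ρ : Representation k G V} {σ : Representation k G W}
  {H : Subgroup G}

theorem ker_le_ker_of_injective (f : σ.IntertwiningMap ρ) (hf : Function.Injective f) :
    MonoidHom.ker ρ ≤ MonoidHom.ker σ := fun g hg => by
  rw [MonoidHom.mem_ker] at hg ⊢
  refine LinearMap.ext fun w => hf ?_
  rw [IntertwiningMap.isIntertwining, hg]
  rfl

theorem ker_le_ker_of_surjective (f : σ.IntertwiningMap ρ) (hf : Function.Surjective f) :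
    MonoidHom.ker σ ≤ MonoidHom.ker ρ := fun g hg => by
  rw [MonoidHom.mem_ker] at hg ⊢
  refine LinearMap.ext fun v => ?_
  obtain ⟨w, rfl⟩ := hf v
  rw [← IntertwiningMap.isIntertwining, hg]
  rfl

def subrepresentationCompSubtypeOrderIso (hH : H ⊔ MonoidHom.ker ρ = ⊤) :
    Subrepresentation (ρ.comp H.subtype) ≃o Subrepresentation ρ where
  toFun p := ⟨p.toSubmodule, fun g v hv => by
    obtain ⟨h, hh, n, hn, rfl⟩ :=
      Subgroup.mem_sup_of_normal_right.mp (hH ▸ Subgroup.mem_top g : g ∈ H ⊔ MonoidHom.ker ρ)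
    rw [map_mul, Module.End.mul_apply, (MonoidHom.mem_ker).mp hn, Module.End.one_apply]
    exact p.apply_mem_toSubmodule ⟨h, hh⟩ hv⟩
  invFun q := ⟨q.toSubmodule, fun h _ hv => q.apply_mem_toSubmodule h hv⟩
  left_inv _ := rfl
  right_inv _ := rfl
  map_rel_iff' := Iff.rfl

theorem isIrreducible_comp_subtype [IsIrreducible ρ] (hH : H ⊔ MonoidHom.ker ρ = ⊤) :
    IsIrreducible (ρ.comp H.subtype) :=
  (subrepresentationCompSubtypeOrderIso hH).isSimpleOrder

/-- The translates of `W` by coset representatives of `H` span a `G`-stable subspace, which is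
all of `V`. -/
theorem finrank_le_index_mul_finrank [IsIrreducible ρ] [FiniteDimensional k V] [H.FiniteIndex]
    (W : Subrepresentation (ρ.comp H.subtype)) (hW : W ≠ ⊥) :
    finrank k V ≤ H.index * finrank k W.toSubmodule := by
  classical
  have := H.fintypeQuotientOfFiniteIndex
  let U : Submodule k V := ⨆ q : G ⧸ H, W.toSubmodule.map (ρ q.out)
  have hmap : ∀ g : G, W.toSubmodule.map (ρ g) ≤ U := by
    intro g
    obtain ⟨h, hh⟩ := QuotientGroup.mk_out_eq_mul H g
    refine le_trans ?_ (le_iSup _ (g : G ⧸ H))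
    rintro _ ⟨w, hw, rfl⟩
    refine ⟨ρ h⁻¹ w, W.apply_mem_toSubmodule h⁻¹ hw, ?_⟩
    show ρ (g : G ⧸ H).out (ρ h⁻¹ w) = ρ g w
    rw [hh, ← Module.End.mul_apply, ← map_mul, mul_inv_cancel_right]
  have hUinv : ∀ g : G, U.map (ρ g) ≤ U := fun g => by
    refine (Submodule.map_iSup _ _).trans_le (iSup_le fun q => ?_)
    rw [← Submodule.map_comp, ← Module.End.mul_eq_comp, ← map_mul]
    exact hmap _
  have hWU : W.toSubmodule ≤ U := by simpa [Module.End.one_eq_id] using hmap 1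
  let U' : Subrepresentation ρ := ⟨U, fun g _ hv => hUinv g (Submodule.mem_map_of_mem hv)⟩
  have hU'_ne_bot : U' ≠ ⊥ := fun h => hW <| Subrepresentation.toSubmodule_injective <|
    eq_bot_iff.mpr (hWU.trans (eq_bot_iff.mp congr(($h).toSubmodule)))
  have hU : U = ⊤ := congr(($((eq_bot_or_eq_top U').resolve_left hU'_ne_bot)).toSubmodule)
  calc finrank k V = finrank k U := by rw [hU, finrank_top]
    _ ≤ ∑ q : G ⧸ H, finrank k (W.toSubmodule.map (ρ q.out)) := Submodule.finrank_iSup_le_sum _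
    _ ≤ ∑ _q : G ⧸ H, finrank k W.toSubmodule :=
      Finset.sum_le_sum fun q _ => Submodule.finrank_map_le _ _
    _ = H.index * finrank k W.toSubmodule := by
      rw [Finset.sum_const, Finset.card_univ, smul_eq_mul, Subgroup.index_eq_card,
        Nat.card_eq_fintype_card]

end Representation

namespace Subgroup

variable {G : Type*} [Group G] {H K : Subgroup G}

theorem index_mul_index_le_of_subgroupOf_le [K.FiniteIndex] (hKH : K ≤ H) {L : Subgroup H}
    (hL : K.subgroupOf H ≤ L) : H.index * L.index ≤ K.index := by
  rw [← relIndex_mul_index hKH, mul_comm]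
  exact Nat.mul_le_mul_right _ (index_antitone hL)

theorem index_subgroupOf_of_sup_eq_top [K.Normal] (h : H ⊔ K = ⊤) :
    (K.subgroupOf H).index = K.index := by
  rw [← relIndex, ← relIndex_sup_right, h, relIndex_top_right]

theorem sum_dite_mem {M : Type*} [Fintype G] [AddCommMonoid M] (H : Subgroup G)
    [DecidablePred (· ∈ H)] (f : H → M) :
    ∑ g : G, (if h : g ∈ H then f ⟨g, h⟩ else 0) = ∑ h : H, f h := by
  rw [← Fintype.sum_subtype_add_sum_subtype (· ∈ H)]
  have h0 : ∑ g : {g // g ∉ H}, (if h : (g : G) ∈ H then f ⟨g, h⟩ else 0) = 0 :=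
    Finset.sum_eq_zero fun g _ => dif_neg g.2
  rw [h0, add_zero]
  exact Finset.sum_congr rfl fun h _ => dif_pos h.2

end Subgroup

theorem Nat.div_le_div_of_mul_le {a b c n i : ℕ} (hc : 0 < c) (hcb : c ≤ i * b)
    (hia : i * a ≤ n) : a / b ≤ n / c := by
  have hi : 0 < i := Nat.pos_of_ne_zero fun h => by simp [h] at hcb; omega
  calc a / b = i * a / (i * b) := (Nat.mul_div_mul_left a b hi).symm
    _ ≤ i * a / c := Nat.div_le_div_left hcb hc
    _ ≤ n / c := Nat.div_le_div_right hia

theorem innerChar_indChar {G : Type} [Group G] [Finite G] (H : Subgroup G) (θ : FDRep ℂ H)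
    {ψ : G → ℂ} (hψ : ∀ x g, ψ (x * g * x⁻¹) = ψ g) :
    innerChar G (indChar H θ) ψ = innerChar H θ.character (fun h => ψ h) := by
  classical
  have := Fintype.ofFinite G
  have hconj : ∀ x : G, ∑ g : G, (if h : x * g * x⁻¹ ∈ H then θ.character ⟨_, h⟩ else 0) *
      starRingEnd ℂ (ψ g) = ∑ h : H, θ.character h * starRingEnd ℂ (ψ h) := by
    intro x
    rw [← (MulAut.conj x).symm.toEquiv.sum_comp,
      ← H.sum_dite_mem fun h => θ.character h * starRingEnd ℂ (ψ h)]
    refine Finset.sum_congr rfl fun g _ => ?_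
    have hg : x * (x⁻¹ * g * x) * x⁻¹ = g := by group
    have hψg : ψ (x⁻¹ * g * x) = ψ g := by simpa using hψ x⁻¹ g
    simp only [MulEquiv.toEquiv_eq_coe, MulEquiv.coe_toEquiv, MulAut.conj_symm_apply, hg, hψg,
      dite_mul, zero_mul]
  unfold innerChar indChar
  simp only [finsum_eq_sum_of_fintype, div_mul_eq_mul_div, Finset.sum_mul, ← Finset.sum_div]
  rw [Finset.sum_comm]
  simp only [hconj, Finset.sum_const, Finset.card_univ, nsmul_eq_mul, ← Nat.card_eq_fintype_card]
  field_simp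

theorem innerChar_character_eq_finrank {G V W : Type} [Group G] [Finite G] [AddCommGroup V]
    [Module ℂ V] [FiniteDimensional ℂ V] [AddCommGroup W] [Module ℂ W] [FiniteDimensional ℂ W]
    (ρ : Representation ℂ G V) (σ : Representation ℂ G W) :
    innerChar G σ.character ρ.character = finrank ℂ (ρ.IntertwiningMap σ) := by
  have := Fintype.ofFinite G
  have : Invertible (Nat.card G : ℂ) :=
    invertibleOfNonzero (Nat.cast_ne_zero.mpr Nat.card_pos.ne')
  rw [← Representation.card_inv_mul_sum_char_mul_char_eq_finrank, innerChar,
    finsum_eq_sum_of_fintype, div_eq_inv_mul]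
  simp only [ρ.char_inv]

theorem starRingEnd_innerChar {G : Type} [Group G] [Finite G] (φ ψ : G → ℂ) :
    starRingEnd ℂ (innerChar G φ ψ) = innerChar G ψ φ := by
  have := Fintype.ofFinite G
  simp only [innerChar, finsum_eq_sum_of_fintype, map_div₀, map_sum, map_mul, Complex.conj_conj,
    map_natCast, mul_comm]

theorem exists_intertwiningMap_ne_zero_of_innerChar_indChar_ne_zero {G : Type} [Group G]
    [Finite G] {H : Subgroup G} {θ : FDRep ℂ H} {χ : FDRep ℂ G}
    (h : innerChar G (indChar H θ) χ.character ≠ 0) :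
    ∃ f : Representation.IntertwiningMap θ.ρ (χ.ρ.comp H.subtype), f ≠ 0 := by
  rw [innerChar_indChar H θ fun x g => χ.char_conj g x, ← starRingEnd_innerChar, map_ne_zero]
    at h
  have hrank := (innerChar_character_eq_finrank θ.ρ (χ.ρ.comp H.subtype)).symm.trans_ne h
  have := finrank_pos_iff.mp (Nat.pos_of_ne_zero (Nat.cast_ne_zero.mp hrank))
  exact exists_ne 0

theorem charKer_eq_ker {G : Type} [Group G] (V : FDRep ℂ G) : charKer V = MonoidHom.ker V.ρ := by
  ext g
  rw [charKer, MonoidHom.mem_ker, MonoidHom.mem_ker, Units.ext_iff,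
    Representation.asGroupHom_apply]
  rfl

section Codegree

open Representation

variable {G : Type} [Group G] {H : Subgroup G} {θ : FDRep ℂ H} {χ : FDRep ℂ G} [Simple θ]
  [Simple χ] (f : IntertwiningMap θ.ρ (χ.ρ.comp H.subtype))

theorem codeg_le_codeg_of_charKer_le [Finite G] (hKH : charKer χ ≤ H) (hf : f ≠ 0) :
    codeg θ ≤ codeg χ := by
  have := FDRep.nontrivial_of_simple χ
  have hker : (charKer χ).subgroupOf H ≤ charKer θ := by
    rw [charKer_eq_ker, charKer_eq_ker]
    exact ker_le_ker_of_injective f ((IsIrreducible.injective_or_eq_zero f).resolve_right hf)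
  have hrange : f.range ≠ ⊥ := fun h => hf <| IntertwiningMap.ext <| LinearMap.ext fun v => by
    have : f v ∈ f.range := ⟨v, rfl⟩
    rwa [h] at this
  have hdim : finrank ℂ χ ≤ H.index * finrank ℂ θ :=
    (finrank_le_index_mul_finrank f.range hrange).trans
      (Nat.mul_le_mul_left _ (LinearMap.finrank_range_le f.toLinearMap))
  exact Nat.div_le_div_of_mul_le finrank_pos hdim
    (Subgroup.index_mul_index_le_of_subgroupOf_le hKH hker)

theorem codeg_eq_codeg_of_sup_charKer_eq_top (hH : H ⊔ charKer χ = ⊤) (hf : f ≠ 0) :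
    codeg θ = codeg χ := by
  rw [charKer_eq_ker] at hH
  have := isIrreducible_comp_subtype hH
  have hinj := (IsIrreducible.injective_or_eq_zero f).resolve_right hf
  have hsurj := (IsIrreducible.surjective_or_eq_zero f).resolve_right hf
  have hker : charKer θ = (charKer χ).subgroupOf H := by
    rw [charKer_eq_ker, charKer_eq_ker]
    exact le_antisymm (ker_le_ker_of_surjective f hsurj) (ker_le_ker_of_injective f hinj)
  have hdim : finrank ℂ θ = finrank ℂ χ :=
    (LinearEquiv.ofBijective f.toLinearMap ⟨hinj, hsurj⟩).finrank_eq
  rw [codeg, codeg, hker, hdim, charKer_eq_ker, Subgroup.index_subgroupOf_of_sup_eq_top hH]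

end Codegree

theorem stmt_3 {G : Type} [Group G] [Finite G] (H : Subgroup G) (hmax : IsCoatom H)
    (θ : FDRep ℂ ↥H) (hθ : Simple θ) (χ : FDRep ℂ G) (hχ : Simple χ)
    (hcons : innerChar G (indChar H θ) χ.character ≠ 0) :
    codeg θ ≤ codeg χ := by
  obtain ⟨f, hf⟩ := exists_intertwiningMap_ne_zero_of_innerChar_indChar_ne_zero hcons
  by_cases hKH : charKer χ ≤ H
  · exact codeg_le_codeg_of_charKer_le f hKH hf
  · exact (codeg_eq_codeg_of_sup_charKer_eq_top f (hmax.2 _ (left_lt_sup.mpr hKH)) hf).le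
end

section
/- Let G be a finite solvable group, N a normal subgroup, and U_N/N = F₂(G/N) the preimage of the second Fitting subgroup of G/N. If G has two distinct minimal normal subgroups N_a and N_b, then F₂(G) = U_{N_a} ∩ U_{N_b}, and consequently the derived length of G/F₂(G) equals the maximum of the derived lengths of G/U_{N_a} and G/U_{N_b}. -/
open CategoryTheory

/-- `M/N` is nilpotent: some term of the lower central series of `M` lands in `N`. -/
def nilpotentFactor {G : Type} [Group G] (N M : Subgroup G) : Prop :=
  ∃ m : ℕ, (fun K => ⁅K, M⁆)^[m] M ≤ N

/-- The preimage in `G` of the Fitting subgroup of `G/N`: the largest normal subgroup `K`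
of `G` with `K/N` nilpotent.  In particular `fitPre ⊥` is the Fitting subgroup `F(G)`,
`fitPre (fitPre ⊥)` is `F₂(G)`, and `fitPre (fitPre N)` is the preimage `U_N` of `F₂(G/N)`. -/
noncomputable def fitPre {G : Type} [Group G] (N : Subgroup G) : Subgroup G :=
  sSup {K : Subgroup G | K.Normal ∧ nilpotentFactor N K}

/-- The derived length of the quotient `G/M`: the least `n` with `G⁽ⁿ⁾ ≤ M`. -/
noncomputable def dlQuot {G : Type} [Group G] (M : Subgroup G) : ℕ :=
  sInf {n : ℕ | derivedSeries G n ≤ M}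

/-- `N` is a minimal normal subgroup of `G`. -/
def IsMinimalNormal {G : Type} [Group G] (N : Subgroup G) : Prop :=
  N.Normal ∧ N ≠ ⊥ ∧ ∀ K : Subgroup G, K.Normal → K ≠ ⊥ → K ≤ N → K = N

/-!
Intersecting with `N ⊓ N'` commutes with taking Fitting preimages: a normal subgroup that is
nilpotent modulo `N` and modulo `N'` is nilpotent modulo `N ⊓ N'`, and in a finite group the
Fitting preimage is itself nilpotent modulo `N` by Fitting's theorem. Applying this twice to
`Na ⊓ Nb = ⊥` gives `F₂(G) = U_{Na} ⊓ U_{Nb}`, and the derived length of `G` modulo an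
intersection is the maximum of the derived lengths.
-/

namespace Subgroup

variable {G : Type*} [Group G]

theorem commutator_le_iff_le_comap_centralizer (H K N : Subgroup G) [N.Normal] :
    ⁅H, K⁆ ≤ N ↔
      H ≤ (centralizer (K.map (QuotientGroup.mk' N) : Set (G ⧸ N))).comap
        (QuotientGroup.mk' N) := by
  conv_lhs => rw [← QuotientGroup.ker_mk' N]
  rw [← map_eq_bot_iff, map_commutator, commutator_eq_bot_iff_le_centralizer,
    map_le_iff_le_comap]

theorem iSup_commutator_le_iff {ι : Sort*} (H : ι → Subgroup G) (K N : Subgroup G) [N.Normal] :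
    ⁅⨆ i, H i, K⁆ ≤ N ↔ ∀ i, ⁅H i, K⁆ ≤ N := by
  simp only [commutator_le_iff_le_comap_centralizer, iSup_le_iff]

theorem commutator_sup_le_iff (H K₁ K₂ N : Subgroup G) [N.Normal] :
    ⁅H, K₁ ⊔ K₂⁆ ≤ N ↔ ⁅H, K₁⁆ ≤ N ∧ ⁅H, K₂⁆ ≤ N := by
  simp only [commutator_comm H, commutator_le_iff_le_comap_centralizer, sup_le_iff]

/-- Indexed so that commutation with `X` raises the index by one, already at index `0`. -/
def lowerCentralFiltration (X : Subgroup G) : ℕ → Subgroup G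
  | 0 => ⊤
  | k + 1 => X.lowerCentralSeries k

instance lowerCentralFiltration_normal (X : Subgroup G) [X.Normal] (k : ℕ) :
    (X.lowerCentralFiltration k).Normal := by
  cases k
  · exact normal_top
  · exact lowerCentralSeries_normal X _

theorem commutator_lowerCentralFiltration_le (X : Subgroup G) [X.Normal] (k : ℕ) :
    ⁅X.lowerCentralFiltration k, X⁆ ≤ X.lowerCentralFiltration (k + 1) := by
  cases k
  · exact commutator_le_right ⊤ X
  · exact le_rfl

theorem lowerCentralFiltration_le (X : Subgroup G) {m k : ℕ} (h : m < k) :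
    X.lowerCentralFiltration k ≤ X.lowerCentralSeries m := by
  obtain ⟨j, rfl⟩ := Nat.exists_eq_add_of_lt h
  exact X.lowerCentralSeries_antitone (by omega)

/-- These bound the lower central series of `A ⊔ B`. -/
def mixedLowerCentralFiltration (A B : Subgroup G) (n : ℕ) : Subgroup G :=
  ⨆ p : {p : ℕ × ℕ // p.1 + p.2 = n},
    A.lowerCentralFiltration p.1.1 ⊓ B.lowerCentralFiltration p.1.2

theorem le_mixedLowerCentralFiltration {A B : Subgroup G} {i j n : ℕ} (h : i + j = n) :
    A.lowerCentralFiltration i ⊓ B.lowerCentralFiltration j ≤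
      mixedLowerCentralFiltration A B n :=
  le_iSup (fun p : {p : ℕ × ℕ // p.1 + p.2 = n} =>
    A.lowerCentralFiltration p.1.1 ⊓ B.lowerCentralFiltration p.1.2) ⟨(i, j), h⟩

variable {A B : Subgroup G} [A.Normal] [B.Normal]

instance mixedLowerCentralFiltration_normal (n : ℕ) :
    (mixedLowerCentralFiltration A B n).Normal :=
  iSup_normal _

theorem commutator_inf_lowerCentralFiltration_le (i j : ℕ) :
    ⁅A.lowerCentralFiltration i ⊓ B.lowerCentralFiltration j, A⁆ ≤
      A.lowerCentralFiltration (i + 1) ⊓ B.lowerCentralFiltration j :=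
  le_inf ((commutator_mono inf_le_left le_rfl).trans (A.commutator_lowerCentralFiltration_le i))
    ((commutator_le_left _ _).trans inf_le_right)

theorem commutator_mixedLowerCentralFiltration_le (n : ℕ) :
    ⁅mixedLowerCentralFiltration A B n, A ⊔ B⁆ ≤ mixedLowerCentralFiltration A B (n + 1) := by
  rw [mixedLowerCentralFiltration, iSup_commutator_le_iff]
  rintro ⟨⟨i, j⟩, hij : i + j = n⟩
  dsimp only
  rw [commutator_sup_le_iff]
  constructor
  · exact (commutator_inf_lowerCentralFiltration_le i j).trans
      (le_mixedLowerCentralFiltration (by omega))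
  · rw [inf_comm]
    refine (commutator_inf_lowerCentralFiltration_le j i).trans ?_
    rw [inf_comm]
    exact le_mixedLowerCentralFiltration (by omega)

theorem lowerCentralSeries_sup_le_mixedLowerCentralFiltration (n : ℕ) :
    (A ⊔ B).lowerCentralSeries n ≤ mixedLowerCentralFiltration A B (n + 1) := by
  induction n with
  | zero =>
    refine sup_le ?_ ?_
    · simpa [lowerCentralFiltration] using le_mixedLowerCentralFiltration (A := A) (B := B)
        (i := 1) (j := 0) rfl
    · simpa [lowerCentralFiltration] using le_mixedLowerCentralFiltration (A := A) (B := B)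
        (i := 0) (j := 1) rfl
  | succ n ih =>
    exact (commutator_mono ih le_rfl).trans (commutator_mixedLowerCentralFiltration_le _)

/-- Fitting's theorem. -/
theorem lowerCentralSeries_sup_le {N : Subgroup G} {a b : ℕ} (ha : A.lowerCentralSeries a ≤ N)
    (hb : B.lowerCentralSeries b ≤ N) : (A ⊔ B).lowerCentralSeries (a + b + 1) ≤ N := by
  refine (lowerCentralSeries_sup_le_mixedLowerCentralFiltration _).trans (iSup_le ?_)
  rintro ⟨⟨i, j⟩, hij : i + j = a + b + 2⟩
  dsimp only
  rcases lt_or_ge a i with hi | hj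
  · exact inf_le_left.trans ((A.lowerCentralFiltration_le hi).trans ha)
  · exact inf_le_right.trans ((B.lowerCentralFiltration_le (by omega)).trans hb)

end Subgroup

section Fitting

variable {G : Type} [Group G]

theorem nilpotentFactor_iff {N M : Subgroup G} :
    nilpotentFactor N M ↔ ∃ m, M.lowerCentralSeries m ≤ N := by
  suffices h : ∀ m, (fun K => ⁅K, M⁆)^[m] M = M.lowerCentralSeries m by
    simp only [nilpotentFactor, h]
  intro m
  induction m with
  | zero => rfl
  | succ m ih => rw [Function.iterate_succ_apply', ih, Subgroup.lowerCentralSeries_succ]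

theorem nilpotentFactor.sup {N A B : Subgroup G} [A.Normal] [B.Normal]
    (hA : nilpotentFactor N A) (hB : nilpotentFactor N B) : nilpotentFactor N (A ⊔ B) := by
  obtain ⟨a, ha⟩ := nilpotentFactor_iff.mp hA
  obtain ⟨b, hb⟩ := nilpotentFactor_iff.mp hB
  exact nilpotentFactor_iff.mpr ⟨a + b + 1, Subgroup.lowerCentralSeries_sup_le ha hb⟩

theorem nilpotentFactor.inf {N N' K K' : Subgroup G} (hK : nilpotentFactor N K)
    (hK' : nilpotentFactor N' K') : nilpotentFactor (N ⊓ N') (K ⊓ K') := by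
  obtain ⟨m, hm⟩ := nilpotentFactor_iff.mp hK
  obtain ⟨m', hm'⟩ := nilpotentFactor_iff.mp hK'
  refine nilpotentFactor_iff.mpr ⟨max m m', le_inf ?_ ?_⟩
  · exact (Subgroup.lowerCentralSeries_mono _ inf_le_left).trans
      ((K.lowerCentralSeries_antitone (le_max_left m m')).trans hm)
  · exact (Subgroup.lowerCentralSeries_mono _ inf_le_right).trans
      ((K'.lowerCentralSeries_antitone (le_max_right m m')).trans hm')

theorem le_fitPre {N K : Subgroup G} (hK : K.Normal) (h : nilpotentFactor N K) :
    K ≤ fitPre N :=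
  le_sSup ⟨hK, h⟩

theorem fitPre_mono {N N' : Subgroup G} (h : N ≤ N') : fitPre N ≤ fitPre N' :=
  sSup_le_sSup fun _ ⟨hK, m, hm⟩ => ⟨hK, m, hm.trans h⟩

theorem fitPre_normal_and_nilpotentFactor [Finite G] (N : Subgroup G) :
    (fitPre N).Normal ∧ nilpotentFactor N (fitPre N) := by
  show fitPre N ∈ {K | K.Normal ∧ nilpotentFactor N K}
  refine SupClosed.sSup_mem ?_ (Set.toFinite _) ⟨Subgroup.normal_bot, 0, bot_le⟩ subset_rfl
  rintro A ⟨hA, hnA⟩ B ⟨hB, hnB⟩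
  exact ⟨Subgroup.sup_normal A B, hnA.sup hnB⟩

theorem fitPre_inf [Finite G] (N N' : Subgroup G) : fitPre (N ⊓ N') = fitPre N ⊓ fitPre N' := by
  obtain ⟨hF, hnF⟩ := fitPre_normal_and_nilpotentFactor N
  obtain ⟨hF', hnF'⟩ := fitPre_normal_and_nilpotentFactor N'
  refine le_antisymm (le_inf (fitPre_mono inf_le_left) (fitPre_mono inf_le_right)) ?_
  exact le_fitPre (Subgroup.normal_inf_normal _ _) (hnF.inf hnF')

end Fitting

theorem IsMinimalNormal.inf_eq_bot {G : Type} [Group G] {N N' : Subgroup G}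
    (hN : IsMinimalNormal N) (hN' : IsMinimalNormal N') (hne : N ≠ N') : N ⊓ N' = ⊥ := by
  by_contra h
  have : (N ⊓ N').Normal := @Subgroup.normal_inf_normal _ _ _ _ hN.1 hN'.1
  exact hne ((hN.2.2 _ this h inf_le_left).symm.trans (hN'.2.2 _ this h inf_le_right))

theorem dlQuot_le_iff {G : Type} [Group G] (hG : Group.IsSolvable G) (M : Subgroup G) {n : ℕ} :
    dlQuot M ≤ n ↔ derivedSeries G n ≤ M := by
  refine ⟨fun h => (derivedSeries_antitone G h).trans ?_, fun h => Nat.sInf_le h⟩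
  obtain ⟨k, hk⟩ := (Group.isSolvable_def G).mp hG
  exact Nat.sInf_mem (s := {n | derivedSeries G n ≤ M}) ⟨k, hk.trans_le bot_le⟩

theorem dlQuot_inf {G : Type} [Group G] (hG : Group.IsSolvable G) (M M' : Subgroup G) :
    dlQuot (M ⊓ M') = max (dlQuot M) (dlQuot M') :=
  eq_of_forall_ge_iff fun n => by simp only [dlQuot_le_iff hG, max_le_iff, le_inf_iff]

theorem stmt_18 {G : Type} [Group G] [Finite G] (hsol : IsSolvable G)
    (Na Nb : Subgroup G) (ha : IsMinimalNormal Na) (hb : IsMinimalNormal Nb)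
    (hne : Na ≠ Nb) :
    fitPre (fitPre (⊥ : Subgroup G)) = fitPre (fitPre Na) ⊓ fitPre (fitPre Nb) ∧
    dlQuot (fitPre (fitPre (⊥ : Subgroup G))) =
      max (dlQuot (fitPre (fitPre Na))) (dlQuot (fitPre (fitPre Nb))) := by
  have hF₂ : fitPre (fitPre (⊥ : Subgroup G)) = fitPre (fitPre Na) ⊓ fitPre (fitPre Nb) := by
    rw [← ha.inf_eq_bot hb hne, fitPre_inf, fitPre_inf]
  exact ⟨hF₂, by rw [hF₂, dlQuot_inf hsol]⟩
end

section
/- Let G be a finite solvable group with a unique minimal normal subgroup N, Φ(G) = 1, and write G = H ⋉ N for a maximal subgroup H. Then for every nontrivial linear character λ of N with H-orbit size s = |H : I_H(λ)|, there is a faithful irreducible character χ of G of degree s; consequently the number of distinct nontrivial orbit sizes of H acting on Irr(N) is at most |cod(G)|. -/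
open CategoryTheory

/-- The conjugate `λᵍ` of a linear character `λ` of a normal subgroup `N ⊴ G`,
given by `λᵍ(n) = λ(g⁻¹ n g)`. -/
def conjChar {G : Type} [Group G] (N : Subgroup G) (hN : N.Normal) (g : G)
    (lam : ↥N →* ℂˣ) : ↥N →* ℂˣ :=
  letI := hN
  lam.comp (MulAut.conjNormal g⁻¹).toMonoidHom

/-- `V` is the unique minimal normal subgroup of `G`. -/
def IsUniqueMinimalNormal {G : Type} [Group G] (V : Subgroup G) : Prop :=
  V.Normal ∧ V ≠ ⊥ ∧ ∀ N : Subgroup G, N.Normal → N ≠ ⊥ → V ≤ N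

/-!
Every character `λ` of `N` extends to its stabilizer `I = I_G(λ)`: writing `x = h n` with
`h ∈ H`, `n ∈ N`, the map `h n ↦ λ n` is a homomorphism on `I`. Inducing this extension `θ` to `G`
(as the space of functions `f` with `f (i x) = θ i * f x`) gives a representation of dimension
`|G : I|`, which is the size of the `H`-orbit of `λ` because `G = H N` and `N` fixes `λ`.
`N` acts diagonally on it, through the conjugates of `λ`, which are pairwise distinct on distinct
cosets of `I`; averaging against one conjugate projects any nonzero subrepresentation onto a
function supported on a single coset, whose translates span everything, so the induced
representation is irreducible. Its kernel is normal and does not contain `N` since `λ ≠ 1`, so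
it is trivial by the uniqueness of the minimal normal subgroup. Hence `|G| / s` is a codegree
for every nontrivial orbit size `s`, and `s ↦ |G| / s` is injective on divisors of `|G|`.
-/

section ConjugateCharacters

variable {G M : Type*} [Group G] {N : Subgroup G} [hN : N.Normal]

instance MonoidHom.conjMulAction [Monoid M] : MulAction G (N →* M) where
  smul g f := f.comp (MulAut.conjNormal g⁻¹).toMonoidHom
  one_smul f := by ext; simp [HSMul.hSMul]
  mul_smul g h f := by ext; simp [HSMul.hSMul]

theorem MonoidHom.conj_smul_apply [Monoid M] (g : G) (f : N →* M) (n : N) :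
    (g • f) n = f ⟨g⁻¹ * n * g, hN.conj_mem' n n.2 g⟩ := by
  show f _ = f _
  congr 1
  ext
  simp

theorem MonoidHom.conj_smul_one [Monoid M] (g : G) : g • (1 : N →* M) = 1 := rfl

theorem le_stabilizer_conj [CommMonoid M] (f : N →* M) : N ≤ MulAction.stabilizer G f := by
  intro n hn
  ext m
  rw [MonoidHom.conj_smul_apply]
  have : (⟨n⁻¹ * m * n, _⟩ : N) = (⟨n, hn⟩ : N)⁻¹ * m * ⟨n, hn⟩ := rfl
  rw [this, map_mul, map_mul, mul_comm, ← mul_assoc, ← map_mul, mul_inv_cancel, map_one, one_mul]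

end ConjugateCharacters

theorem MulAction.inv_smul_eq_inv_smul_iff {G α : Type*} [Group G] [MulAction G α] (a : α)
    (x y : G) : x⁻¹ • a = y⁻¹ • a ↔ y * x⁻¹ ∈ stabilizer G a := by
  rw [mem_stabilizer_iff, mul_smul]
  exact ⟨fun h => by rw [h, smul_inv_smul], eq_inv_smul_iff.mpr⟩

section Complement

variable {G M : Type*} [Group G] {N H : Subgroup G} [N.Normal] [CommMonoid M]

theorem setOf_exists_smul_eq_orbit (hcompl : H.IsComplement' N) (f : N →* M) :
    {μ | ∃ h ∈ H, μ = h • f} = MulAction.orbit G f := by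
  ext μ
  constructor
  · rintro ⟨h, -, rfl⟩
    exact ⟨h, rfl⟩
  · rintro ⟨g, rfl⟩
    refine ⟨_, (hcompl.equiv g).1.2, ?_⟩
    conv_lhs => rw [← hcompl.equiv_fst_mul_equiv_snd g]
    show (_ * _) • f = _
    rw [mul_smul, le_stabilizer_conj f (hcompl.equiv g).2.2]

theorem exists_extension_to_stabilizer (hcompl : H.IsComplement' N) (f : N →* M) :
    ∃ θ : MulAction.stabilizer G f →* M, ∀ n : N, θ ⟨n, le_stabilizer_conj f n.2⟩ = f n := by
  let π : G →* H := hcompl.QuotientMulEquiv.toMonoidHom.comp (QuotientGroup.mk' N)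
  have hπ (x : G) : (π x : G)⁻¹ * x ∈ N :=
    QuotientGroup.eq.mp (hcompl.quotientGroupMk_leftQuotientEquiv _)
  have hπN (n : N) : π n = 1 := by
    have h1 : QuotientGroup.mk' N (n : G) = 1 := (QuotientGroup.eq_one_iff _).mpr n.2
    simp only [π, MonoidHom.comp_apply, h1, map_one]
  have hπstab (x : MulAction.stabilizer G f) : (π x : G) ∈ MulAction.stabilizer G f := by
    have : (π x : G) = x * ((π x : G)⁻¹ * x)⁻¹ := by group
    rw [this]
    exact mul_mem x.2 (inv_mem (le_stabilizer_conj f (hπ x)))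
  refine ⟨{ toFun x := f ⟨(π x : G)⁻¹ * x, hπ x⟩, map_one' := ?_, map_mul' x y := ?_ },
    fun n => ?_⟩
  · simp only [OneMemClass.coe_one, map_one, inv_one, mul_one]
    exact map_one f
  · have key := congrArg (fun μ : N →* M => μ ⟨(π x : G)⁻¹ * x, hπ x⟩) (hπstab y)
    simp only [MonoidHom.conj_smul_apply] at key
    rw [← key, ← map_mul]
    congr 1
    ext
    simp [mul_assoc]
  · simp only [MonoidHom.coe_mk, OneHom.coe_mk, hπN, OneMemClass.coe_one, inv_one, one_mul]

end Complement

theorem Representation.coind_apply_coe_apply {k G H A : Type*} [Semiring k] [Monoid G] [Monoid H]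
    [AddCommMonoid A] [Module k A] (φ : G →* H) (σ : Representation k G A) (h : H)
    (f : coindV φ σ) (x : H) : (coind φ σ h f : H → A) x = (f : H → A) (x * h) :=
  rfl

theorem QuotientGroup.mul_inv_out_rightRel_mem {G : Type*} [Group G] {I : Subgroup G} (x : G) :
    x * (Quotient.out (Quotient.mk (QuotientGroup.rightRel I) x))⁻¹ ∈ I :=
  QuotientGroup.rightRel_apply.mp (Quotient.mk_out x)

instance {G : Type*} [Group G] {I : Subgroup G} [I.FiniteIndex] :
    Finite (Quotient (QuotientGroup.rightRel I)) :=
  Finite.of_equiv _ (QuotientGroup.quotientRightRelEquivQuotientLeftRel I).symm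

section CoinducedCharacter

open Representation

variable {k G : Type*} [Field k] [Group G] {I : Subgroup G} (θ : I →* kˣ)

def linearCharRep : Representation k I k :=
  (Algebra.lsmul k k k).toMonoidHom.comp ((Units.coeHom k).comp θ)

@[simp]
theorem linearCharRep_apply (i : I) (x : k) : linearCharRep θ i x = θ i * x := by
  simp [linearCharRep]

variable {θ} in
theorem coindV_linearCharRep_apply {f : G → k} (hf : f ∈ coindV I.subtype (linearCharRep θ))
    {x y : G} (h : y * x⁻¹ ∈ I) : f y = θ ⟨y * x⁻¹, h⟩ * f x := by
  simpa using hf ⟨_, h⟩ x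

noncomputable def coindVLinearCharEval :
    coindV I.subtype (linearCharRep θ) →ₗ[k] (Quotient (QuotientGroup.rightRel I) → k) where
  toFun f c := (f : G → k) c.out
  map_add' _ _ := rfl
  map_smul' _ _ := rfl

theorem coindVLinearCharEval_apply (f : coindV I.subtype (linearCharRep θ))
    (c : Quotient (QuotientGroup.rightRel I)) : coindVLinearCharEval θ f c = (f : G → k) c.out :=
  rfl

theorem coindVLinearCharEval_bijective : Function.Bijective (coindVLinearCharEval θ) := by
  open QuotientGroup in
  refine ⟨(injective_iff_map_eq_zero _).mpr fun f hf => ?_, fun a => ?_⟩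
  · ext x
    rw [coindV_linearCharRep_apply f.2 (mul_inv_out_rightRel_mem x)]
    simp [show (f : G → k) _ = 0 from congrFun hf _]
  · refine ⟨⟨fun x => θ ⟨_, mul_inv_out_rightRel_mem x⟩ * a (Quotient.mk _ x), fun i x => ?_⟩, ?_⟩
    · have hq : Quotient.mk (rightRel I) (i * x) = Quotient.mk _ x :=
        Quotient.sound (rightRel_apply.mpr (by simp))
      simp only [Subgroup.subtype_apply, hq, linearCharRep_apply]
      rw [← mul_assoc, ← Units.val_mul, ← map_mul]
      congr 3
      exact Subtype.ext (mul_assoc _ _ _)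
    · ext c
      have h1 (h : (1 : G) ∈ I) : θ ⟨1, h⟩ = 1 := map_one θ
      simp [coindVLinearCharEval, h1]

variable [I.FiniteIndex]

instance : Module.Finite k (coindV I.subtype (linearCharRep θ)) :=
  Module.Finite.equiv (LinearEquiv.ofBijective _ (coindVLinearCharEval_bijective θ)).symm

theorem finrank_coindV_linearCharRep :
    Module.finrank k (coindV I.subtype (linearCharRep θ)) = I.index := by
  have := Fintype.ofFinite (Quotient (QuotientGroup.rightRel I))
  rw [(LinearEquiv.ofBijective _ (coindVLinearCharEval_bijective θ)).finrank_eq,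
    Module.finrank_fintype_fun_eq_card, ← Nat.card_eq_fintype_card,
    Nat.card_congr (QuotientGroup.quotientRightRelEquivQuotientLeftRel I), Subgroup.index]

instance : Nontrivial (coindV I.subtype (linearCharRep θ)) :=
  Module.nontrivial_of_finrank_pos (by
    rw [finrank_coindV_linearCharRep]; exact Nat.pos_of_ne_zero Subgroup.FiniteIndex.index_ne_zero)

variable {θ} in
theorem eq_top_of_mem_of_support_subset_coset
    (U : Subrepresentation (coind I.subtype (linearCharRep θ)))
    {w : coindV I.subtype (linearCharRep θ)} (hw : w ∈ U) {x₀ : G} (hx₀ : (w : G → k) x₀ ≠ 0)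
    (hsupp : ∀ x, x * x₀⁻¹ ∉ I → (w : G → k) x = 0) : U = ⊤ := by
  have := Fintype.ofFinite (Quotient (QuotientGroup.rightRel I))
  have hspan (f : coindV I.subtype (linearCharRep θ)) :
      f = ∑ c : Quotient (QuotientGroup.rightRel I),
        ((f : G → k) c.out / (w : G → k) x₀) • coind I.subtype _ (c.out⁻¹ * x₀) w := by
    refine (coindVLinearCharEval_bijective θ).1 (funext fun c' => ?_)
    rw [map_sum, Finset.sum_apply, Finset.sum_eq_single c']
    · simp only [coindVLinearCharEval_apply, Submodule.coe_smul, Pi.smul_apply, smul_eq_mul,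
        coind_apply_coe_apply, mul_inv_cancel_left, div_mul_cancel₀ _ hx₀]
    · intro c _ hc
      have hnot : c'.out * (c.out⁻¹ * x₀) * x₀⁻¹ ∉ I := by
        rw [mul_assoc, mul_inv_cancel_right, ← QuotientGroup.rightRel_apply]
        exact fun h => hc (Quotient.out_equiv_out.mp h)
      simp only [coindVLinearCharEval_apply, Submodule.coe_smul, Pi.smul_apply, smul_eq_mul,
        coind_apply_coe_apply, hsupp _ hnot, mul_zero]
    · simp
  refine Subrepresentation.toSubmodule_injective (eq_top_iff.mpr fun f _ => ?_)
  rw [hspan f]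
  exact Submodule.sum_mem _ fun c _ => Submodule.smul_mem _ _ (U.apply_mem_toSubmodule _ hw)

end CoinducedCharacter

theorem sum_inv_mul_eq_ite {k A : Type*} [Field k] [Group A] [Fintype A]
    [DecidableEq (A →* kˣ)] (χ ψ : A →* kˣ) :
    ∑ a, ((χ a)⁻¹ * ψ a : k) = if χ = ψ then (Fintype.card A : k) else 0 := by
  split_ifs with h
  · subst h
    simp
  · have hne : (Units.coeHom k).comp (χ⁻¹ * ψ) ≠ 1 := by
      intro h1
      apply h
      ext a
      exact congrArg Units.val (inv_mul_eq_one.mp (Units.ext (DFunLike.congr_fun h1 a)))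
    simpa using sum_hom_units_eq_zero _ hne

section Clifford

open Representation MulAction

variable {k G : Type*} [Field k] [Group G] {N : Subgroup G} [hN : N.Normal] {lam : N →* kˣ}
  {θ : stabilizer G lam →* kˣ} (hθ : ∀ n : N, θ ⟨n, le_stabilizer_conj lam n.2⟩ = lam n)
include hθ

theorem coind_apply_coe_apply_of_mem_normal
    (f : coindV (stabilizer G lam).subtype (linearCharRep θ)) (n : N) (x : G) :
    ((coind _ _ (n : G) f : coindV _ _) : G → k) x = (x⁻¹ • lam) n * (f : G → k) x := by
  have hconj : x * n * x⁻¹ ∈ N := hN.conj_mem n n.2 x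
  rw [coind_apply_coe_apply,
    coindV_linearCharRep_apply f.2 (x := x) (le_stabilizer_conj lam hconj),
    MonoidHom.conj_smul_apply]
  simp only [inv_inv]
  exact congrArg (fun u : kˣ => (u : k) * _) (hθ ⟨_, hconj⟩)

theorem coe_sum_smul_coind_apply [Fintype N] [DecidableEq (N →* kˣ)]
    (u : coindV (stabilizer G lam).subtype (linearCharRep θ)) (x₀ x : G) :
    ((∑ n : N, ((((x₀⁻¹ • lam) n)⁻¹ : kˣ) : k) • coind _ _ (n : G) u : coindV _ _) : G → k) x =
      (if x₀⁻¹ • lam = x⁻¹ • lam then (Fintype.card N : k) else 0) * (u : G → k) x := by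
  rw [← sum_inv_mul_eq_ite, Finset.sum_mul, Submodule.coe_sum, Finset.sum_apply]
  simp only [Submodule.coe_smul, Pi.smul_apply, smul_eq_mul,
    coind_apply_coe_apply_of_mem_normal hθ, mul_assoc]

theorem isIrreducible_coind_linearCharRep [Finite G] [CharZero k] :
    (coind (stabilizer G lam).subtype (linearCharRep θ)).IsIrreducible := by
  classical
  have := Fintype.ofFinite N
  have : Nontrivial (Subrepresentation (coind (stabilizer G lam).subtype (linearCharRep θ))) :=
    ⟨⊥, ⊤, fun h => bot_ne_top (congrArg Subrepresentation.toSubmodule h)⟩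
  refine IsSimpleOrder.of_forall_eq_top fun U hU => ?_
  obtain ⟨u, hu, hu0⟩ := Submodule.exists_mem_ne_zero_of_ne_bot
    fun h => hU (Subrepresentation.toSubmodule_injective h)
  obtain ⟨x₀, hx₀⟩ := Function.ne_iff.mp fun h => hu0 (Subtype.ext h)
  -- `w` is the projection of `u` onto the `x₀⁻¹ • lam`-eigenspace of `N`, whose elements are
  -- supported on the coset of `x₀` since distinct cosets carry distinct conjugates of `lam`.
  refine eq_top_of_mem_of_support_subset_coset U (x₀ := x₀)
    (w := ∑ n : N, ((((x₀⁻¹ • lam) n)⁻¹ : kˣ) : k) • coind _ _ (n : G) u)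
    (Submodule.sum_mem _ fun n _ => Submodule.smul_mem _ _ (U.apply_mem_toSubmodule n hu)) ?_ ?_
  · rw [coe_sum_smul_coind_apply hθ, if_pos rfl]
    exact mul_ne_zero (Nat.cast_ne_zero.mpr Fintype.card_ne_zero) hx₀
  · intro x hx
    rw [coe_sum_smul_coind_apply hθ, if_neg (mt (inv_smul_eq_inv_smul_iff lam x₀ x).mp hx),
      zero_mul]

theorem eq_one_of_le_ker_coind [(stabilizer G lam).FiniteIndex]
    (hker : N ≤ (asGroupHom (coind (stabilizer G lam).subtype (linearCharRep θ))).ker) :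
    lam = 1 := by
  obtain ⟨f, hf⟩ := exists_ne (0 : coindV (stabilizer G lam).subtype (linearCharRep θ))
  obtain ⟨x, hx⟩ := Function.ne_iff.mp fun h => hf (Subtype.ext h)
  have hx_lam : x⁻¹ • lam = 1 := by
    ext m
    have h1 : coind (stabilizer G lam).subtype (linearCharRep θ) (m : G) = 1 := by
      rw [← asGroupHom_apply, MonoidHom.mem_ker.mp (hker m.2), Units.val_one]
    have h2 := coind_apply_coe_apply_of_mem_normal hθ f m x
    rw [h1] at h2
    exact (mul_eq_right₀ hx).mp h2.symm
  rw [← smul_inv_smul x lam, hx_lam, MonoidHom.conj_smul_one]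

end Clifford

universe u in
theorem FDRep.simple_of_isIrreducible {k G W : Type u} [Field k] [Monoid G] [AddCommGroup W]
    [Module k W] [Module.Finite k W] (ρ : Representation k G W) [ρ.IsIrreducible] :
    Simple (FDRep.of ρ) := by
  open Representation in
  have : Nontrivial W := by
    by_contra h
    rw [not_nontrivial_iff_subsingleton] at h
    exact (bot_ne_top : (⊥ : Subrepresentation ρ) ≠ ⊤)
      (Subrepresentation.toSubmodule_injective (Subsingleton.elim (α := Submodule k W) _ _))
  refine ⟨fun {Y} f _ => ⟨fun _ hf => ?_, fun hf => ?_⟩⟩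
  · subst hf
    have h1 : 𝟙 (FDRep.of ρ) = 0 := by rw [← IsIso.inv_hom_id (0 : Y ⟶ _), Limits.comp_zero]
    obtain ⟨w, hw⟩ := exists_ne (0 : W)
    exact hw (congrArg (fun φ : FDRep.of ρ ⟶ FDRep.of ρ => φ.hom.hom.hom w) h1)
  · have hinj : Function.Injective f.hom.hom.hom :=
      (Rep.mono_iff_injective _).1 (inferInstance : Mono ((forget₂ (FDRep k G) (Rep k G)).map f))
    let φ : IntertwiningMap Y.ρ ρ := f.hom.hom.hom.intertwiningMap_of_isIntertwiningMap _ _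
      fun g v => congrArg (fun m : Y.V ⟶ (FDRep.of ρ).V => m.hom.hom v) (f.comm g)
    have hsurj := (IsIrreducible.surjective_or_eq_zero φ).resolve_right fun h => hf
      (Action.hom_ext _ _ (FGModuleCat.hom_ext (congrArg IntertwiningMap.toLinearMap h)))
    have : IsIso ((forget (FDRep k G)).map f) := (isIso_iff_bijective _).2 ⟨hinj, hsurj⟩
    exact isIso_of_reflects_iso f (forget (FDRep k G))

theorem codeg_of_charKer_eq_bot {G : Type} [Group G] {V : FDRep ℂ G} (h : charKer V = ⊥) :
    codeg V = Nat.card G / Module.finrank ℂ V := by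
  rw [codeg, h, Subgroup.index_bot]

theorem codSet_finite (G : Type) [Group G] [Finite G] : (codSet G).Finite :=
  (Set.finite_Iic (Nat.card G)).subset fun _ ⟨_, _, hV⟩ =>
    hV ▸ (Nat.div_le_self _ _).trans (Nat.le_of_dvd Nat.card_pos (Subgroup.index_dvd_card _))

theorem Set.ncard_le_ncard_of_forall_dvd_div_mem {n : ℕ} (hn : n ≠ 0) {S T : Set ℕ}
    (hT : T.Finite) (h : ∀ s ∈ S, s ∣ n ∧ n / s ∈ T) : S.ncard ≤ T.ncard :=
  ncard_le_ncard_of_injOn (n / ·) (fun s hs => (h s hs).2) (fun a ha b hb hab => by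
    rw [← Nat.div_div_self (h a ha).1 hn, ← Nat.div_div_self (h b hb).1 hn]
    exact congrArg (n / ·) hab) hT

theorem exists_faithful_simple_finrank_eq_index {G : Type} [Group G] [Finite G]
    {N H : Subgroup G} [N.Normal] (hcompl : H.IsComplement' N)
    (hmin : ∀ M : Subgroup G, M.Normal → M ≠ ⊥ → N ≤ M) {lam : N →* ℂˣ} (hlam : lam ≠ 1) :
    ∃ χ : FDRep ℂ G, Simple χ ∧ charKer χ = ⊥ ∧
      Module.finrank ℂ χ = (MulAction.stabilizer G lam).index := by
  obtain ⟨θ, hθ⟩ := exists_extension_to_stabilizer hcompl lam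
  have := isIrreducible_coind_linearCharRep hθ
  refine ⟨FDRep.of (Representation.coind _ (linearCharRep θ)),
    FDRep.simple_of_isIrreducible _, ?_, finrank_coindV_linearCharRep θ⟩
  by_contra hker
  exact hlam (eq_one_of_le_ker_coind hθ (hmin _ (MonoidHom.normal_ker _) hker))

theorem stmt_19_general {G : Type} [Group G] [Finite G]
    (N : Subgroup G) (hN : N.Normal) (hmin : IsUniqueMinimalNormal N)
    (H : Subgroup G) (hcompl : H.IsComplement' N) :
    (∀ lam : ↥N →* ℂˣ, lam ≠ 1 →
      ∃ χ : FDRep ℂ G, Simple χ ∧ charKer χ = ⊥ ∧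
        Module.finrank ℂ χ =
          Set.ncard {μ : ↥N →* ℂˣ | ∃ h ∈ H, μ = conjChar N hN h lam}) ∧
    Set.ncard {s : ℕ | ∃ lam : ↥N →* ℂˣ, lam ≠ 1 ∧
        s = Set.ncard {μ : ↥N →* ℂˣ | ∃ h ∈ H, μ = conjChar N hN h lam}} ≤
      (codSet G).ncard := by
  have horbit (lam : N →* ℂˣ) :
      Set.ncard {μ | ∃ h ∈ H, μ = conjChar N hN h lam} = (MulAction.stabilizer G lam).index := by
    rw [MulAction.index_stabilizer, ← setOf_exists_smul_eq_orbit hcompl]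
    rfl
  have hfaithful (lam : N →* ℂˣ) (hlam : lam ≠ 1) :=
    exists_faithful_simple_finrank_eq_index hcompl hmin.2.2 hlam
  refine ⟨fun lam hlam => horbit lam ▸ hfaithful lam hlam, ?_⟩
  refine Set.ncard_le_ncard_of_forall_dvd_div_mem (Nat.card_pos (α := G)).ne' (codSet_finite G) ?_
  rintro s ⟨lam, hlam, rfl⟩
  obtain ⟨χ, hχ, hker, hdim⟩ := hfaithful lam hlam
  rw [horbit]
  exact ⟨Subgroup.index_dvd_card _, χ, hχ, by rw [codeg_of_charKer_eq_bot hker, hdim]⟩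

theorem stmt_19 {G : Type} [Group G] [Finite G] (hsol : IsSolvable G)
    (N : Subgroup G) (hN : N.Normal) (hmin : IsUniqueMinimalNormal N)
    (hfrattini : frattini G = ⊥)
    (H : Subgroup G) (hmax : IsCoatom H) (hcompl : H.IsComplement' N) :
    (∀ lam : ↥N →* ℂˣ, lam ≠ 1 →
      ∃ χ : FDRep ℂ G, Simple χ ∧ charKer χ = ⊥ ∧
        Module.finrank ℂ χ =
          Set.ncard {μ : ↥N →* ℂˣ | ∃ h ∈ H, μ = conjChar N hN h lam}) ∧
    Set.ncard {s : ℕ | ∃ lam : ↥N →* ℂˣ, lam ≠ 1 ∧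
        s = Set.ncard {μ : ↥N →* ℂˣ | ∃ h ∈ H, μ = conjChar N hN h lam}} ≤
      (codSet G).ncard :=
  stmt_19_general N hN hmin H hcompl
end
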